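/- The function h(l) = 2 l² Φ(−l√I / 2), defined for l > 0 with constant I > 0 (where Φ is the standard normal CDF), attains a maximum on (0, ∞), and at any interior maximizer l* the first-order condition 4Φ(−l*√I/2) = l*√I · φ(l*√I/2) holds, where φ is the standard normal density. -/

import Mathlib

/-!
`h` vanishes at `0` and is positive on `(0, ∞)`; since `e^{-u²/2} ≤ e^{u + 1/2}`, the Gaussian
tail satisfies `Φ(-t) ≤ C e^{-t}`, so `h(l) → 0` as `l → ∞`. The extreme value theorem then gives
a maximizer in `(0, ∞)`, and there `h'(l) = l (4 Φ(-l√I/2) - l√I φ(l√I/2))` vanishes.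
-/

open Real MeasureTheory

noncomputable def stdNormalPDF (u : ℝ) : ℝ :=
  (Real.sqrt (2 * Real.pi))⁻¹ * Real.exp (-u ^ 2 / 2)

noncomputable def stdNormalCDF (t : ℝ) : ℝ :=
  ∫ u in Set.Iic t, stdNormalPDF u

open Set Filter Topology

lemma stdNormalPDF_eq_gaussianPDFReal : stdNormalPDF = ProbabilityTheory.gaussianPDFReal 0 1 := by
  ext u
  simp [stdNormalPDF, ProbabilityTheory.gaussianPDFReal]

lemma stdNormalPDF_pos (u : ℝ) : 0 < stdNormalPDF u := by
  rw [stdNormalPDF_eq_gaussianPDFReal]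
  exact ProbabilityTheory.gaussianPDFReal_pos _ _ _ one_ne_zero

lemma integrable_stdNormalPDF : Integrable stdNormalPDF := by
  rw [stdNormalPDF_eq_gaussianPDFReal]
  exact ProbabilityTheory.integrable_gaussianPDFReal _ _

lemma continuous_stdNormalPDF : Continuous stdNormalPDF := by
  unfold stdNormalPDF
  fun_prop

lemma stdNormalPDF_neg (u : ℝ) : stdNormalPDF (-u) = stdNormalPDF u := by
  simp [stdNormalPDF]

lemma stdNormalPDF_le_exp (u : ℝ) : stdNormalPDF u ≤ (√(2 * π))⁻¹ * exp (u + 1 / 2) := by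
  unfold stdNormalPDF
  gcongr
  nlinarith [sq_nonneg (u + 1)]

lemma stdNormalCDF_eq_add_intervalIntegral (t : ℝ) :
    stdNormalCDF t = stdNormalCDF 0 + ∫ u in (0 : ℝ)..t, stdNormalPDF u := by
  rw [← intervalIntegral.integral_Iic_sub_Iic integrable_stdNormalPDF.integrableOn
    integrable_stdNormalPDF.integrableOn]
  unfold stdNormalCDF
  ring

lemma hasDerivAt_stdNormalCDF (t : ℝ) : HasDerivAt stdNormalCDF (stdNormalPDF t) t := by
  rw [funext stdNormalCDF_eq_add_intervalIntegral]
  exact (intervalIntegral.integral_hasDerivAt_right integrable_stdNormalPDF.intervalIntegrable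
    (continuous_stdNormalPDF.stronglyMeasurableAtFilter _ _)
    continuous_stdNormalPDF.continuousAt).const_add _

lemma continuous_stdNormalCDF : Continuous stdNormalCDF :=
  continuous_iff_continuousAt.mpr fun t => (hasDerivAt_stdNormalCDF t).continuousAt

lemma stdNormalCDF_pos (t : ℝ) : 0 < stdNormalCDF t := by
  unfold stdNormalCDF
  rw [setIntegral_pos_iff_support_of_nonneg_ae
    (ae_of_all _ fun u => (stdNormalPDF_pos u).le) integrable_stdNormalPDF.integrableOn,
    Function.support_eq_univ fun u => (stdNormalPDF_pos u).ne', univ_inter, volume_Iic]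
  exact ENNReal.zero_lt_top

lemma stdNormalCDF_le_exp (t : ℝ) : stdNormalCDF t ≤ (√(2 * π))⁻¹ * exp (t + 1 / 2) := by
  have hint : IntegrableOn (fun u => (√(2 * π))⁻¹ * exp (1 / 2) * exp u) (Iic t) :=
    (integrableOn_exp_Iic t).const_mul _
  calc stdNormalCDF t ≤ ∫ u in Iic t, (√(2 * π))⁻¹ * exp (1 / 2) * exp u :=
        setIntegral_mono_on integrable_stdNormalPDF.integrableOn hint measurableSet_Iic
          fun u _ => (stdNormalPDF_le_exp u).trans_eq (by rw [exp_add]; ring)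
    _ = (√(2 * π))⁻¹ * exp (t + 1 / 2) := by
        rw [integral_const_mul, integral_exp_Iic, exp_add]; ring

lemma tendsto_pow_mul_stdNormalCDF_neg_mul_atTop (n : ℕ) {c : ℝ} (hc : 0 < c) :
    Tendsto (fun l => l ^ n * stdNormalCDF (-(c * l))) atTop (𝓝 0) := by
  have hbound := (tendsto_rpow_mul_exp_neg_mul_atTop_nhds_zero n c hc).const_mul
    ((√(2 * π))⁻¹ * exp (1 / 2))
  rw [mul_zero] at hbound
  refine tendsto_of_tendsto_of_tendsto_of_le_of_le' tendsto_const_nhds hbound ?_ ?_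
  · filter_upwards [eventually_ge_atTop 0] with l hl
    exact mul_nonneg (pow_nonneg hl n) (stdNormalCDF_pos _).le
  · filter_upwards [eventually_ge_atTop 0] with l hl
    calc l ^ n * stdNormalCDF (-(c * l))
        ≤ l ^ n * ((√(2 * π))⁻¹ * exp (-(c * l) + 1 / 2)) := by
          gcongr
          exact stdNormalCDF_le_exp _
      _ = (√(2 * π))⁻¹ * exp (1 / 2) * (l ^ (n : ℝ) * exp (-c * l)) := by
          rw [rpow_natCast, exp_add, neg_mul]; ring

lemma exists_isMaxOn_Ioi_of_tendsto_atTop {f : ℝ → ℝ} {a c : ℝ} (hf : ContinuousOn f (Ici 0))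
    (hlim : Tendsto f atTop (𝓝 c)) (ha : 0 < a) (hca : c < f a) (h0a : f 0 < f a) :
    ∃ x, 0 < x ∧ IsMaxOn f (Ioi 0) x := by
  have hfar : ∀ᶠ x in cocompact ℝ ⊓ 𝓟 (Ici 0), f x ≤ f a := by
    rw [cocompact_eq_atBot_atTop, eventually_inf_principal, eventually_sup]
    exact ⟨(eventually_lt_atBot 0).mono fun x hx hx0 => absurd hx0 (not_le.mpr hx),
      (hlim.eventually (gt_mem_nhds hca)).mono fun x hx _ => hx.le⟩
  obtain ⟨x, hx0, hmax⟩ := hf.exists_isMaxOn' isClosed_Ici ha.le hfar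
  have hxa : f a ≤ f x := hmax ha.le
  have hx : 0 < x := lt_of_le_of_ne hx0 (by rintro rfl; linarith)
  exact ⟨x, hx, hmax.on_subset Ioi_subset_Ici_self⟩

/-- The speed `h`, with `s` standing for `√I`. -/
noncomputable def diffusionSpeed (s l : ℝ) : ℝ := 2 * l ^ 2 * stdNormalCDF (-(l * s) / 2)

lemma continuous_diffusionSpeed (s : ℝ) : Continuous (diffusionSpeed s) := by
  unfold diffusionSpeed
  exact (continuous_const.mul (continuous_pow 2)).mul
    (continuous_stdNormalCDF.comp (by fun_prop))

lemma hasDerivAt_diffusionSpeed (s l : ℝ) :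
    HasDerivAt (diffusionSpeed s)
      (l * (4 * stdNormalCDF (-(l * s) / 2) - l * s * stdNormalPDF (l * s / 2))) l := by
  have hinner : HasDerivAt (fun l : ℝ => -(l * s) / 2) (-s / 2) l := by
    simpa using (((hasDerivAt_id l).mul_const s).neg).div_const 2
  have hcdf := (hasDerivAt_stdNormalCDF (-(l * s) / 2)).comp l hinner
  refine (((hasDerivAt_pow 2 l).const_mul 2).mul hcdf).congr_deriv ?_
  rw [Function.comp_apply, show -(l * s) / 2 = -(l * s / 2) by ring, stdNormalPDF_neg]
  ring

lemma tendsto_diffusionSpeed_atTop {s : ℝ} (hs : 0 < s) :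
    Tendsto (diffusionSpeed s) atTop (𝓝 0) := by
  have h := (tendsto_pow_mul_stdNormalCDF_neg_mul_atTop 2 (half_pos hs)).const_mul 2
  rw [mul_zero] at h
  refine h.congr fun l => ?_
  rw [diffusionSpeed, show -(l * s) / 2 = -(s / 2 * l) by ring, mul_assoc]

lemma exists_isMaxOn_diffusionSpeed {s : ℝ} (hs : 0 < s) :
    ∃ l, 0 < l ∧ IsMaxOn (diffusionSpeed s) (Ioi 0) l := by
  have hpos : 0 < diffusionSpeed s 1 := by
    have := stdNormalCDF_pos (-(1 * s) / 2)
    unfold diffusionSpeed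
    positivity
  exact exists_isMaxOn_Ioi_of_tendsto_atTop (continuous_diffusionSpeed s).continuousOn
    (tendsto_diffusionSpeed_atTop hs) one_pos hpos (by simpa [diffusionSpeed] using hpos)

lemma diffusionSpeed_firstOrderCondition {s l : ℝ} (hl : 0 < l)
    (hmax : IsMaxOn (diffusionSpeed s) (Ioi 0) l) :
    4 * stdNormalCDF (-(l * s) / 2) = l * s * stdNormalPDF (l * s / 2) := by
  have hderiv := (hmax.isLocalMax (Ioi_mem_nhds hl)).hasDerivAt_eq_zero
    (hasDerivAt_diffusionSpeed s l)
  rw [mul_eq_zero, sub_eq_zero] at hderiv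
  exact hderiv.resolve_left hl.ne'

/-- The RWMH diffusion speed `h(l) = 2 l² Φ(−l√I/2)` attains a maximum on `(0, ∞)`, and at
any maximizer `l*` the first-order condition `4Φ(−l*√I/2) = l*√I φ(l*√I/2)` holds. -/
theorem rwmh_diffusion_speed_max (I : ℝ) (hI : 0 < I) :
    (∃ lstar : ℝ, 0 < lstar ∧ ∀ l : ℝ, 0 < l →
        2 * l ^ 2 * stdNormalCDF (-(l * Real.sqrt I) / 2)
          ≤ 2 * lstar ^ 2 * stdNormalCDF (-(lstar * Real.sqrt I) / 2)) ∧
    (∀ lstar : ℝ, 0 < lstar →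
      (∀ l : ℝ, 0 < l →
        2 * l ^ 2 * stdNormalCDF (-(l * Real.sqrt I) / 2)
          ≤ 2 * lstar ^ 2 * stdNormalCDF (-(lstar * Real.sqrt I) / 2)) →
      4 * stdNormalCDF (-(lstar * Real.sqrt I) / 2)
        = lstar * Real.sqrt I * stdNormalPDF (lstar * Real.sqrt I / 2)) := by
  obtain ⟨lstar, hlstar, hmax⟩ := exists_isMaxOn_diffusionSpeed (Real.sqrt_pos.mpr hI)
  exact ⟨⟨lstar, hlstar, fun l hl => hmax hl⟩,
    fun l hl hmax => diffusionSpeed_firstOrderCondition hl fun l' hl' => hmax l' hl'⟩
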